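/- Every continuous bilinear form A : c₀ × c₀ → ℝ is 2-dominated: there is a constant C ≥ 0 such that ∑_{k=1}^N |A(x_k, y_k)| ≤ C ‖(x_k)_{k=1}^N‖_{w,2} ‖(y_k)_{k=1}^N‖_{w,2} for all finite families x_1,…,x_N, y_1,…,y_N in c₀. -/

import Mathlib

open scoped BigOperators ZeroAtInfty

/-- The weak ℓ_p norm of a finite family `x` in a real normed space `E`. -/
noncomputable def weakNorm {E : Type*} [NormedAddCommGroup E] [NormedSpace ℝ E]
    (p : ℝ) {m : ℕ} (x : Fin m → E) : ℝ :=
  ⨆ φ : {φ : E →L[ℝ] ℝ // ‖φ‖ ≤ 1}, (∑ j, ‖φ.1 (x j)‖ ^ p) ^ (1 / p)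

/-!
The heart of the matter is Grothendieck's inequality, with constant 96 obtained by
bootstrapping. If `∑ aᵢⱼ sᵢ tⱼ ≤ M` for all `s, t` in the unit cube and `G` is the supremum of
`∑ aᵢⱼ ⟪uᵢ, vⱼ⟫` over unit vectors of all spaces `ℝᵈ`, embed `ℝᵈ` isometrically into
`L²({±1}ᵈ)` by Rademacher sums `Φ = ∑ ε_z w_z`, and split `Φ` at the level `R = √48` into the
clipped part `clip R ∘ Φ` and the tail `Φ - clip R ∘ Φ`. Pointwise the clipped parts contribute
at most `R² M = 48 M`. The fourth moment bound `E Φ⁴ ≤ 3 (E Φ²)²` gives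
`‖tail‖₂ ≤ ‖Φ‖₄² / R ≤ √3 / R = 1/4`, so each of the two tail terms contributes at most `G / 4`.
Hence `G ≤ 48 M + G / 2`, i.e. `G ≤ 96 M`.

For `A` on `c₀`, restrict to the first `n` coordinates, giving the matrix `aᵢⱼ = A(eᵢ, eⱼ)`,
bounded on the cube by the norm of `A`. With signs `ε_k` making `ε_k A(x_k, y_k) = |A(x_k, y_k)|`,
the sum `∑_k |A(x_k, y_k)|` becomes `∑ aᵢⱼ ⟪uᵢ, vⱼ⟫` for `uᵢ = (ε_k x_k(i))_k` and
`vⱼ = (y_k(j))_k`. Testing the weak ℓ₂ norms against coordinate functionals bounds `‖uᵢ‖` and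
`‖vⱼ‖` by `‖(x_k)‖_{w,2}` and `‖(y_k)‖_{w,2}`. Finally let `n → ∞`.
-/

open Finset Filter Topology

section DotProduct

variable {Ω : Type*} [Fintype Ω]

lemma dotProduct_self_nonneg (u : Ω → ℝ) : 0 ≤ u ⬝ᵥ u :=
  Fintype.sum_nonneg fun _ => mul_self_nonneg _

lemma eq_zero_of_dotProduct_self_nonpos {u : Ω → ℝ} (h : u ⬝ᵥ u ≤ 0) : u = 0 :=
  dotProduct_self_eq_zero.1 (h.antisymm (dotProduct_self_nonneg u))

lemma abs_dotProduct_le_one {u v : Ω → ℝ} (hu : u ⬝ᵥ u ≤ 1) (hv : v ⬝ᵥ v ≤ 1) :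
    |u ⬝ᵥ v| ≤ 1 := by
  have hcs : (u ⬝ᵥ v) ^ 2 ≤ (u ⬝ᵥ u) * (v ⬝ᵥ v) := by
    simpa only [dotProduct, sq] using sum_mul_sq_le_sq_mul_sq univ u v
  rw [← sq_le_one_iff_abs_le_one]
  nlinarith [dotProduct_self_nonneg u, dotProduct_self_nonneg v]

end DotProduct

def boolSign (b : Bool) : ℝ := if b then 1 else -1

def rademacherSum {d : ℕ} (w : Fin d → ℝ) (ε : Fin d → Bool) : ℝ :=
  ∑ z, boolSign (ε z) * w z

section Rademacher

variable {d : ℕ}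

lemma sum_fun_fin_succ_bool {M : Type*} [AddCommMonoid M] (f : (Fin (d + 1) → Bool) → M) :
    ∑ ε, f ε = ∑ ε : Fin d → Bool, (f (Fin.cons true ε) + f (Fin.cons false ε)) := by
  rw [← (Fin.consEquiv fun _ => Bool).sum_comp, Fintype.sum_prod_type, Fintype.sum_bool,
    sum_add_distrib]
  rfl

lemma sum_const_fun_fin_bool (c : ℝ) : ∑ _ε : Fin d → Bool, c = 2 ^ d * c := by
  simp

lemma dotProduct_fin_succ (w v : Fin (d + 1) → ℝ) :
    w ⬝ᵥ v = w 0 * v 0 + Fin.tail w ⬝ᵥ Fin.tail v :=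
  Fin.sum_univ_succ _

lemma rademacherSum_cons (w : Fin (d + 1) → ℝ) (b : Bool) (ε : Fin d → Bool) :
    rademacherSum w (Fin.cons b ε) = boolSign b * w 0 + rademacherSum (Fin.tail w) ε := by
  simp [rademacherSum, Fin.sum_univ_succ, Fin.tail]

lemma rademacherSum_dotProduct (w v : Fin d → ℝ) :
    rademacherSum w ⬝ᵥ rademacherSum v = 2 ^ d * (w ⬝ᵥ v) := by
  induction d with
  | zero => simp [dotProduct, rademacherSum]
  | succ d ih =>
    set S := rademacherSum (Fin.tail w)
    set T := rademacherSum (Fin.tail v)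
    calc rademacherSum w ⬝ᵥ rademacherSum v
        = ∑ ε, (2 * (w 0 * v 0) + 2 * (S ε * T ε)) := by
          rw [dotProduct, sum_fun_fin_succ_bool]
          congr! 1 with ε
          simp only [rademacherSum_cons, boolSign, if_true, Bool.false_eq_true, if_false]
          ring
      _ = 2 ^ (d + 1) * (w ⬝ᵥ v) := by
          rw [sum_add_distrib, sum_const_fun_fin_bool, ← mul_sum, ← dotProduct, ih,
            dotProduct_fin_succ w v]
          ring

lemma sum_rademacherSum_pow_four_le (w : Fin d → ℝ) :
    ∑ ε, rademacherSum w ε ^ 4 ≤ 3 * 2 ^ d * (w ⬝ᵥ w) ^ 2 := by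
  induction d with
  | zero => simp [rademacherSum]
  | succ d ih =>
    set S := rademacherSum (Fin.tail w)
    have hS : ∑ ε, S ε ^ 4 ≤ 3 * 2 ^ d * (Fin.tail w ⬝ᵥ Fin.tail w) ^ 2 := ih _
    calc ∑ ε, rademacherSum w ε ^ 4
        = ∑ ε, (2 * w 0 ^ 4 + 12 * w 0 ^ 2 * (S ε * S ε) + 2 * S ε ^ 4) := by
          rw [sum_fun_fin_succ_bool]
          congr! 1 with ε
          simp only [rademacherSum_cons, boolSign, if_true, Bool.false_eq_true, if_false]
          ring
      _ = 2 ^ d * (2 * w 0 ^ 4 + 12 * w 0 ^ 2 * (Fin.tail w ⬝ᵥ Fin.tail w))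
            + 2 * ∑ ε, S ε ^ 4 := by
          rw [sum_add_distrib, sum_add_distrib, sum_const_fun_fin_bool, ← mul_sum, ← mul_sum,
            ← dotProduct, rademacherSum_dotProduct]
          ring
      _ ≤ 3 * 2 ^ (d + 1) * (w ⬝ᵥ w) ^ 2 := by
          have : 0 ≤ (2 : ℝ) ^ d * w 0 ^ 4 := by positivity
          rw [dotProduct_fin_succ w w, pow_succ (2 : ℝ) d]
          nlinarith

lemma rademacherSum_dotProduct_self_le {w : Fin d → ℝ} (hw : w ⬝ᵥ w ≤ 1) :
    rademacherSum w ⬝ᵥ rademacherSum w ≤ 2 ^ d := by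
  rw [rademacherSum_dotProduct]
  exact mul_le_of_le_one_right (by positivity) hw

end Rademacher

def clip (R t : ℝ) : ℝ := max (-R) (min R t)

section Clip

variable {R : ℝ}

lemma clip_of_abs_le {t : ℝ} (h : |t| ≤ R) : clip R t = t := by
  rw [abs_le] at h
  rw [clip, min_eq_right h.2, max_eq_right h.1]

lemma abs_clip_le (hR : 0 ≤ R) (t : ℝ) : |clip R t| ≤ R := by
  unfold clip
  simp only [max_def, min_def]
  split_ifs <;> grind

lemma abs_clip_le_abs (hR : 0 ≤ R) (t : ℝ) : |clip R t| ≤ |t| := by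
  unfold clip
  simp only [max_def, min_def]
  split_ifs <;> grind

lemma abs_sub_clip_le_abs (hR : 0 ≤ R) (t : ℝ) : |t - clip R t| ≤ |t| := by
  unfold clip
  simp only [max_def, min_def]
  split_ifs <;> grind

lemma sq_mul_sq_sub_clip_le (hR : 0 ≤ R) (t : ℝ) : R ^ 2 * (t - clip R t) ^ 2 ≤ t ^ 4 := by
  by_cases h : |t| ≤ R
  · rw [clip_of_abs_le h, sub_self, zero_pow two_ne_zero, mul_zero]
    positivity
  have hRt : R ^ 2 ≤ t ^ 2 := sq_le_sq.2 (by rw [abs_of_nonneg hR]; exact (not_le.1 h).le)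
  have hsub : (t - clip R t) ^ 2 ≤ t ^ 2 := sq_le_sq.2 (abs_sub_clip_le_abs hR t)
  calc R ^ 2 * (t - clip R t) ^ 2 ≤ t ^ 2 * t ^ 2 :=
        mul_le_mul hRt hsub (sq_nonneg _) (sq_nonneg _)
    _ = t ^ 4 := by ring

variable {Ω : Type*} [Fintype Ω]

lemma clip_comp_dotProduct_self_le (hR : 0 ≤ R) (f : Ω → ℝ) :
    (clip R ∘ f) ⬝ᵥ (clip R ∘ f) ≤ f ⬝ᵥ f :=
  sum_le_sum fun ω _ => by
    simpa only [Function.comp_apply, ← sq] using sq_le_sq.2 (abs_clip_le_abs hR (f ω))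

lemma sq_mul_sub_clip_comp_dotProduct_self_le (hR : 0 ≤ R) (f : Ω → ℝ) :
    R ^ 2 * ((f - clip R ∘ f) ⬝ᵥ (f - clip R ∘ f)) ≤ ∑ ω, f ω ^ 4 := by
  rw [dotProduct, mul_sum]
  exact sum_le_sum fun ω _ => by
    simpa only [Pi.sub_apply, Function.comp_apply, ← sq] using sq_mul_sq_sub_clip_le hR (f ω)

end Clip

lemma sub_clip_rademacherSum_dotProduct_self_le {d : ℕ} {w : Fin d → ℝ} (hw : w ⬝ᵥ w ≤ 1) :
    (rademacherSum w - clip √48 ∘ rademacherSum w) ⬝ᵥ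
      (rademacherSum w - clip √48 ∘ rademacherSum w) ≤ 2 ^ d / 16 := by
  have h48 := sq_mul_sub_clip_comp_dotProduct_self_le (Real.sqrt_nonneg 48) (rademacherSum w)
  rw [Real.sq_sqrt (by norm_num)] at h48
  have h4 := sum_rademacherSum_pow_four_le w
  have : (w ⬝ᵥ w) ^ 2 ≤ 1 := pow_le_one₀ (dotProduct_self_nonneg w) hw
  have : (0 : ℝ) ≤ 2 ^ d := by positivity
  nlinarith


namespace Grothendieck

variable {ι κ : Type*} [Fintype ι] [Fintype κ] (a : Matrix ι κ ℝ)

def CubeBounded (M : ℝ) : Prop :=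
  ∀ (s : ι → ℝ) (t : κ → ℝ), (∀ i, |s i| ≤ 1) → (∀ j, |t j| ≤ 1) →
    ∑ i, ∑ j, a i j * (s i * t j) ≤ M

def pairing {Ω : Type*} [Fintype Ω] (u : ι → Ω → ℝ) (v : κ → Ω → ℝ) : ℝ :=
  ∑ i, ∑ j, a i j * (u i ⬝ᵥ v j)

def values : Set ℝ :=
  {r | ∃ (d : ℕ) (u : ι → Fin d → ℝ) (v : κ → Fin d → ℝ),
    (∀ i, u i ⬝ᵥ u i ≤ 1) ∧ (∀ j, v j ⬝ᵥ v j ≤ 1) ∧ pairing a u v = r}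

variable {a} {Ω : Type*} [Fintype Ω]

lemma pairing_smul_smul (u : ι → Ω → ℝ) (v : κ → Ω → ℝ) (c c' : ℝ) :
    pairing a (fun i => c • u i) (fun j => c' • v j) = c * c' * pairing a u v := by
  simp only [pairing, smul_dotProduct, dotProduct_smul, smul_eq_mul, mul_sum]
  exact sum_congr rfl fun i _ => sum_congr rfl fun j _ => by ring

lemma pairing_eq_add_add (u u' : ι → Ω → ℝ) (v v' : κ → Ω → ℝ) :
    pairing a u v = pairing a u' v' + pairing a u' (v - v') + pairing a (u - u') v := by
  simp only [pairing, ← sum_add_distrib]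
  refine sum_congr rfl fun i _ => sum_congr rfl fun j _ => ?_
  simp only [Pi.sub_apply, dotProduct_sub, sub_dotProduct]
  ring

lemma pairing_eq_sum (u : ι → Ω → ℝ) (v : κ → Ω → ℝ) :
    pairing a u v = ∑ ω, ∑ i, ∑ j, a i j * (u i ω * v j ω) := by
  simp only [pairing, dotProduct, mul_sum]
  exact (sum_congr rfl fun i _ => Finset.sum_comm).trans Finset.sum_comm

lemma pairing_rademacherSum {d : ℕ} (u : ι → Fin d → ℝ) (v : κ → Fin d → ℝ) :
    pairing a (fun i => rademacherSum (u i)) (fun j => rademacherSum (v j))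
      = 2 ^ d * pairing a u v := by
  simp only [pairing, rademacherSum_dotProduct, mul_sum]
  exact sum_congr rfl fun i _ => sum_congr rfl fun j _ => by ring

lemma pairing_mem_values {u : ι → Ω → ℝ} {v : κ → Ω → ℝ} (hu : ∀ i, u i ⬝ᵥ u i ≤ 1)
    (hv : ∀ j, v j ⬝ᵥ v j ≤ 1) : pairing a u v ∈ values a := by
  let e := Fintype.equivFin Ω
  have he (f g : Ω → ℝ) : (f ∘ e.symm) ⬝ᵥ (g ∘ e.symm) = f ⬝ᵥ g := by
    rw [dotProduct_comp_equiv_symm, Function.comp_assoc, e.symm_comp_self, Function.comp_id]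
  exact ⟨_, fun i => u i ∘ e.symm, fun j => v j ∘ e.symm, fun i => (he _ _).trans_le (hu i),
    fun j => (he _ _).trans_le (hv j), by simp only [pairing, he]⟩

lemma zero_mem_values : (0 : ℝ) ∈ values a :=
  ⟨0, 0, 0, by simp, by simp, by simp [pairing]⟩

lemma values_bddAbove : BddAbove (values a) := by
  refine ⟨∑ i, ∑ j, |a i j|, ?_⟩
  rintro _ ⟨d, u, v, hu, hv, rfl⟩
  refine sum_le_sum fun i _ => sum_le_sum fun j _ => ?_
  calc a i j * (u i ⬝ᵥ v j) ≤ |a i j| * |u i ⬝ᵥ v j| := (le_abs_self _).trans (abs_mul _ _).le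
    _ ≤ |a i j| := mul_le_of_le_one_right (abs_nonneg _) (abs_dotProduct_le_one (hu i) (hv j))

lemma pairing_le_of_forall_le {K : ℝ} (hK : ∀ r ∈ values a, r ≤ K) {α β : ℝ} (hα : 0 ≤ α)
    (hβ : 0 ≤ β) {u : ι → Ω → ℝ} {v : κ → Ω → ℝ} (hu : ∀ i, u i ⬝ᵥ u i ≤ α ^ 2)
    (hv : ∀ j, v j ⬝ᵥ v j ≤ β ^ 2) : pairing a u v ≤ α * β * K := by
  rcases hα.eq_or_lt with rfl | hα
  · have : u = 0 := funext fun i => eq_zero_of_dotProduct_self_nonpos (by simpa using hu i)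
    simp [pairing, this]
  rcases hβ.eq_or_lt with rfl | hβ
  · have : v = 0 := funext fun j => eq_zero_of_dotProduct_self_nonpos (by simpa using hv j)
    simp [pairing, this]
  have hunit {γ : ℝ} (hγ : 0 < γ) {f : Ω → ℝ} (hf : f ⬝ᵥ f ≤ γ ^ 2) :
      (γ⁻¹ • f) ⬝ᵥ (γ⁻¹ • f) ≤ 1 := by
    rw [smul_dotProduct, dotProduct_smul, smul_eq_mul, smul_eq_mul, ← mul_assoc, ← sq, inv_pow,
      inv_mul_le_one₀ (by positivity)]
    exact hf
  have := hK _ (pairing_mem_values (fun i => hunit hα (hu i)) (fun j => hunit hβ (hv j)))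
  rw [pairing_smul_smul, mul_assoc, inv_mul_le_iff₀ hα, inv_mul_le_iff₀ hβ] at this
  linarith

lemma pairing_le_of_abs_le {M : ℝ} (hM : CubeBounded a M) {R : ℝ} (hR : 0 < R)
    {u : ι → Ω → ℝ} {v : κ → Ω → ℝ} (hu : ∀ i ω, |u i ω| ≤ R) (hv : ∀ j ω, |v j ω| ≤ R) :
    pairing a u v ≤ Fintype.card Ω * (R ^ 2 * M) := by
  have hunit {f : Ω → ℝ} (hf : ∀ ω, |f ω| ≤ R) (ω : Ω) : |f ω / R| ≤ 1 := by
    rw [abs_div, abs_of_pos hR, div_le_one hR]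
    exact hf ω
  rw [pairing_eq_sum, ← nsmul_eq_mul, ← card_univ]
  refine sum_le_card_nsmul _ _ _ fun ω _ => ?_
  calc ∑ i, ∑ j, a i j * (u i ω * v j ω)
      = R ^ 2 * ∑ i, ∑ j, a i j * (u i ω / R * (v j ω / R)) := by
        simp only [mul_sum]
        refine sum_congr rfl fun i _ => sum_congr rfl fun j _ => ?_
        field_simp
    _ ≤ R ^ 2 * M := by
        gcongr
        exact hM _ _ (fun i => hunit (hu i) ω) (fun j => hunit (hv j) ω)

lemma pairing_le_of_sub_clip_le {M : ℝ} (hM : CubeBounded a M) {K : ℝ}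
    (hK : ∀ r ∈ values a, r ≤ K) {Φ : ι → Ω → ℝ} {Ψ : κ → Ω → ℝ}
    (hΦ : ∀ i, Φ i ⬝ᵥ Φ i ≤ (Fintype.card Ω : ℝ)) (hΨ : ∀ j, Ψ j ⬝ᵥ Ψ j ≤ (Fintype.card Ω : ℝ))
    (hΦt : ∀ i, (Φ i - clip √48 ∘ Φ i) ⬝ᵥ (Φ i - clip √48 ∘ Φ i) ≤ (Fintype.card Ω : ℝ) / 16)
    (hΨt : ∀ j, (Ψ j - clip √48 ∘ Ψ j) ⬝ᵥ (Ψ j - clip √48 ∘ Ψ j) ≤ (Fintype.card Ω : ℝ) / 16) :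
    pairing a Φ Ψ ≤ Fintype.card Ω * (48 * M + K / 2) := by
  set D : ℝ := (Fintype.card Ω : ℝ)
  have hR : (0 : ℝ) < √48 := by positivity
  have hsqrtD : √D ^ 2 = D := Real.sq_sqrt (Nat.cast_nonneg _)
  have hD4 : (√D / 4) ^ 2 = D / 16 := by rw [div_pow, hsqrtD]; norm_num
  let Φc i := clip √48 ∘ Φ i
  let Ψc j := clip √48 ∘ Ψ j
  have hΦc i : Φc i ⬝ᵥ Φc i ≤ √D ^ 2 :=
    (clip_comp_dotProduct_self_le hR.le _).trans ((hΦ i).trans_eq hsqrtD.symm)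
  have hclipped : pairing a Φc Ψc ≤ D * (48 * M) := by
    have := pairing_le_of_abs_le hM hR (fun i ω => abs_clip_le hR.le (Φ i ω))
      (fun j ω => abs_clip_le hR.le (Ψ j ω))
    rwa [Real.sq_sqrt (by norm_num)] at this
  have htailΨ : pairing a Φc (Ψ - Ψc) ≤ √D * (√D / 4) * K :=
    pairing_le_of_forall_le hK (Real.sqrt_nonneg D) (by positivity) hΦc
      fun j => (hΨt j).trans_eq hD4.symm
  have htailΦ : pairing a (Φ - Φc) Ψ ≤ √D / 4 * √D * K :=
    pairing_le_of_forall_le hK (by positivity) (Real.sqrt_nonneg D)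
      (fun i => (hΦt i).trans_eq hD4.symm) fun j => (hΨ j).trans_eq hsqrtD.symm
  have hDK : √D * (√D / 4) * K = D / 4 * K := by rw [mul_div_assoc', ← sq, hsqrtD]
  rw [pairing_eq_add_add _ Φc _ Ψc]
  linarith [mul_comm (√D / 4) √D]

lemma mem_values_le_of_forall_le {M : ℝ} (hM : CubeBounded a M) {K : ℝ}
    (hK : ∀ r ∈ values a, r ≤ K) : ∀ r ∈ values a, r ≤ 48 * M + K / 2 := by
  rintro _ ⟨d, u, v, hu, hv, rfl⟩
  have hcard : (Fintype.card (Fin d → Bool) : ℝ) = 2 ^ d := by simp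
  have := pairing_le_of_sub_clip_le hM hK (Φ := fun i => rademacherSum (u i))
    (Ψ := fun j => rademacherSum (v j))
    (fun i => hcard ▸ rademacherSum_dotProduct_self_le (hu i))
    (fun j => hcard ▸ rademacherSum_dotProduct_self_le (hv j))
    (fun i => hcard ▸ sub_clip_rademacherSum_dotProduct_self_le (hu i))
    (fun j => hcard ▸ sub_clip_rademacherSum_dotProduct_self_le (hv j))
  rw [pairing_rademacherSum, hcard] at this
  exact le_of_mul_le_mul_left this (by positivity)

theorem _root_.grothendieck_inequality {M : ℝ} (hM : CubeBounded a M) {α β : ℝ} (hα : 0 ≤ α)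
    (hβ : 0 ≤ β) {u : ι → Ω → ℝ} {v : κ → Ω → ℝ} (hu : ∀ i, u i ⬝ᵥ u i ≤ α ^ 2)
    (hv : ∀ j, v j ⬝ᵥ v j ≤ β ^ 2) : pairing a u v ≤ α * β * (96 * M) := by
  have hsup : sSup (values a) ≤ 48 * M + sSup (values a) / 2 :=
    csSup_le ⟨0, zero_mem_values⟩
      (mem_values_le_of_forall_le hM fun r hr => le_csSup values_bddAbove hr)
  refine pairing_le_of_forall_le (fun r hr => ?_) hα hβ hu hv
  linarith [le_csSup values_bddAbove hr]

end Grothendieck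

section WeakNorm

variable {E : Type*} [NormedAddCommGroup E] [NormedSpace ℝ E] {m : ℕ}

lemma weakNorm_nonneg (p : ℝ) (x : Fin m → E) : 0 ≤ weakNorm p x :=
  Real.iSup_nonneg fun _ => by positivity

lemma rpow_sum_le_weakNorm {p : ℝ} (hp : 0 ≤ p) (x : Fin m → E) {φ : E →L[ℝ] ℝ}
    (hφ : ‖φ‖ ≤ 1) : (∑ j, ‖φ (x j)‖ ^ p) ^ (1 / p) ≤ weakNorm p x := by
  refine le_ciSup (f := fun φ : {φ : E →L[ℝ] ℝ // ‖φ‖ ≤ 1} => (∑ j, ‖φ.1 (x j)‖ ^ p) ^ (1 / p))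
    ⟨(∑ j, ‖x j‖ ^ p) ^ (1 / p), ?_⟩ ⟨φ, hφ⟩
  rintro _ ⟨ψ, rfl⟩
  dsimp only
  gcongr with j
  exact (ψ.1.le_of_opNorm_le ψ.2 _).trans_eq (one_mul _)

lemma sum_sq_le_weakNorm_sq (x : Fin m → E) {φ : E →L[ℝ] ℝ} (hφ : ‖φ‖ ≤ 1) :
    ∑ j, φ (x j) ^ 2 ≤ weakNorm 2 x ^ 2 := by
  have h := rpow_sum_le_weakNorm zero_le_two x hφ
  simp only [Real.rpow_two, Real.norm_eq_abs, sq_abs, ← Real.sqrt_eq_rpow] at h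
  exact (Real.sqrt_le_left (weakNorm_nonneg 2 x)).1 h

end WeakNorm

namespace ZeroAtInftyContinuousMap

lemma norm_le_of_forall_norm_le {α E : Type*} [TopologicalSpace α] [NormedAddCommGroup E]
    {f : C₀(α, E)} {C : ℝ} (hC : 0 ≤ C) (hf : ∀ x, ‖f x‖ ≤ C) : ‖f‖ ≤ C :=
  (BoundedContinuousFunction.norm_le hC).2 hf

section Eval

variable {α E : Type*} [TopologicalSpace α] [NormedAddCommGroup E] [NormedSpace ℝ E]

noncomputable def evalCLM (x : α) : C₀(α, E) →L[ℝ] E :=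
  LinearMap.mkContinuous ⟨⟨fun f => f x, fun _ _ => rfl⟩, fun _ _ => rfl⟩ 1 fun f =>
    (f.toBCF.norm_coe_le_norm x).trans_eq (one_mul _).symm

@[simp] lemma evalCLM_apply (x : α) (f : C₀(α, E)) : evalCLM x f = f x := rfl

lemma norm_evalCLM_le (x : α) : ‖(evalCLM x : C₀(α, E) →L[ℝ] E)‖ ≤ 1 :=
  LinearMap.mkContinuous_norm_le _ zero_le_one _

end Eval

noncomputable def ofFin (n : ℕ) : (Fin n → ℝ) →ₗ[ℝ] C₀(ℕ, ℝ) where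
  toFun s := ⟨⟨fun k => if h : k < n then s ⟨k, h⟩ else 0, continuous_of_discreteTopology⟩, by
    rw [cocompact_eq_atTop]
    exact tendsto_const_nhds.congr' <|
      (eventually_ge_atTop n).mono fun k hk => by simp [not_lt.2 hk]⟩
  map_add' s t := by ext k; simp only [coe_mk, add_apply]; split_ifs <;> simp
  map_smul' c s := by ext k; simp only [coe_mk, smul_apply]; split_ifs <;> simp

lemma ofFin_apply {n : ℕ} (s : Fin n → ℝ) (k : ℕ) :
    ofFin n s k = if h : k < n then s ⟨k, h⟩ else 0 :=
  rfl

lemma norm_ofFin_le {n : ℕ} {s : Fin n → ℝ} {C : ℝ} (hC : 0 ≤ C) (hs : ∀ i, |s i| ≤ C) :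
    ‖ofFin n s‖ ≤ C :=
  norm_le_of_forall_norm_le hC fun k => by
    rw [ofFin_apply]
    split_ifs
    · exact hs _
    · simpa using hC

lemma tendsto_ofFin (x : C₀(ℕ, ℝ)) : Tendsto (fun n => ofFin n fun i => x i) atTop (𝓝 x) := by
  have hx : Tendsto x atTop (𝓝 0) := cocompact_eq_atTop (α := ℕ) ▸ zero_at_infty x
  rw [Metric.tendsto_atTop] at hx ⊢
  intro δ hδ
  obtain ⟨N, hN⟩ := hx (δ / 2) (half_pos hδ)
  refine ⟨N, fun n hn => (dist_eq_norm _ _).trans_lt <|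
    (norm_le_of_forall_norm_le (half_pos hδ).le fun k => ?_).trans_lt (half_lt_self hδ)⟩
  rw [sub_apply, ofFin_apply]
  split_ifs with hk
  · simpa using (half_pos hδ).le
  · simpa [Real.dist_eq] using (hN k (by omega)).le

end ZeroAtInftyContinuousMap

lemma ContinuousLinearMap.apply_apply_eq_sum_single {ι κ E F : Type*} [Fintype ι] [Fintype κ]
    [DecidableEq ι] [DecidableEq κ] [NormedAddCommGroup E] [NormedSpace ℝ E]
    [NormedAddCommGroup F] [NormedSpace ℝ F] (A : E →L[ℝ] F →L[ℝ] ℝ)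
    (L₁ : (ι → ℝ) →ₗ[ℝ] E) (L₂ : (κ → ℝ) →ₗ[ℝ] F) (s : ι → ℝ) (t : κ → ℝ) :
    A (L₁ s) (L₂ t) = ∑ i, ∑ j, A (L₁ (Pi.single i 1)) (L₂ (Pi.single j 1)) * (s i * t j) := by
  conv_lhs => rw [pi_eq_sum_univ' s, pi_eq_sum_univ' t]
  simp only [map_sum, map_smul, _root_.sum_apply, FunLike.coe_smul, Pi.smul_apply, smul_eq_mul,
    mul_sum]
  rw [Finset.sum_comm]
  exact sum_congr rfl fun i _ => sum_congr rfl fun j _ => by ring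

open ZeroAtInftyContinuousMap

lemma sum_abs_apply_ofFin_le {A : C₀(ℕ, ℝ) →L[ℝ] C₀(ℕ, ℝ) →L[ℝ] ℝ} {M : ℝ} (hM0 : 0 ≤ M)
    (hA : ∀ u v, ‖A u v‖ ≤ M * ‖u‖ * ‖v‖) (n : ℕ) {N : ℕ} (x y : Fin N → C₀(ℕ, ℝ)) :
    ∑ k, |A (ofFin n fun i => x k i) (ofFin n fun j => y k j)|
      ≤ weakNorm 2 x * weakNorm 2 y * (96 * M) := by
  let a : Matrix (Fin n) (Fin n) ℝ := fun i j =>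
    A (ofFin n (Pi.single i 1)) (ofFin n (Pi.single j 1))
  have hM : Grothendieck.CubeBounded a M := fun s t hs ht => by
    rw [← A.apply_apply_eq_sum_single]
    calc A (ofFin n s) (ofFin n t) ≤ M * ‖ofFin n s‖ * ‖ofFin n t‖ :=
          (le_abs_self _).trans (hA _ _)
      _ ≤ M * 1 * 1 := by gcongr <;> exact norm_ofFin_le zero_le_one ‹_›
      _ = M := by ring
  let ε (k : Fin N) : ℝ := SignType.sign (A (ofFin n fun i => x k i) (ofFin n fun j => y k j))
  have hε k : ε k ^ 2 ≤ 1 := by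
    rcases lt_trichotomy (A (ofFin n fun i => x k i) (ofFin n fun j => y k j)) 0 with h | h | h <;>
      simp [ε, h]
  let u (i : Fin n) (k : Fin N) : ℝ := ε k * x k i
  let v (j : Fin n) (k : Fin N) : ℝ := y k j
  have hu i : u i ⬝ᵥ u i ≤ weakNorm 2 x ^ 2 := by
    refine (sum_le_sum fun k _ => ?_).trans (sum_sq_le_weakNorm_sq x (norm_evalCLM_le (i : ℕ)))
    simp only [u, evalCLM_apply]
    nlinarith [hε k, sq_nonneg (x k i)]
  have hv j : v j ⬝ᵥ v j ≤ weakNorm 2 y ^ 2 := by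
    simpa [v, dotProduct, sq] using sum_sq_le_weakNorm_sq y (norm_evalCLM_le (j : ℕ))
  calc ∑ k, |A (ofFin n fun i => x k i) (ofFin n fun j => y k j)|
      = ∑ k, ε k * A (ofFin n fun i => x k i) (ofFin n fun j => y k j) :=
        sum_congr rfl fun k _ => (sign_mul_self _).symm
    _ = Grothendieck.pairing a u v := by
        rw [Grothendieck.pairing_eq_sum]
        refine sum_congr rfl fun k _ => ?_
        rw [A.apply_apply_eq_sum_single, mul_sum]
        refine sum_congr rfl fun i _ => ?_
        rw [mul_sum]
        exact sum_congr rfl fun j _ => by simp only [u, v, a]; ring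
    _ ≤ _ := grothendieck_inequality hM (weakNorm_nonneg 2 x) (weakNorm_nonneg 2 y) hu hv

/-- Every continuous bilinear form `A : c₀ × c₀ → ℝ` is 2-dominated: there is `C ≥ 0` with
`∑ₖ |A (x k) (y k)| ≤ C ‖(x k)‖_{w,2} ‖(y k)‖_{w,2}` for all finite families in `c₀`. -/
theorem bilinear_form_on_c0_two_dominated (A : C₀(ℕ, ℝ) →L[ℝ] C₀(ℕ, ℝ) →L[ℝ] ℝ) :
    ∃ C : ℝ, 0 ≤ C ∧ ∀ (N : ℕ) (x y : Fin N → C₀(ℕ, ℝ)),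
      ∑ k, |A (x k) (y k)| ≤ C * weakNorm 2 x * weakNorm 2 y := by
  obtain ⟨M, hM, hA⟩ := A.isBoundedBilinearMap.bound
  refine ⟨96 * M, by positivity, fun N x y => ?_⟩
  have hlim : Tendsto (fun n => ∑ k, |A (ofFin n fun i => x k i) (ofFin n fun j => y k j)|)
      atTop (𝓝 (∑ k, |A (x k) (y k)|)) :=
    tendsto_finsetSum _ fun k _ => ((continuous_abs.comp A.continuous₂).tendsto _).comp
      ((tendsto_ofFin (x k)).prodMk_nhds (tendsto_ofFin (y k)))
  refine le_of_tendsto' hlim fun n => ?_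
  linarith [sum_abs_apply_ofFin_le hM.le hA n x y]
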